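/- Let n = 8. Then a_0 = 1, a_1 = 0, a_2 = 1, a_3 = 0, a_4 = 3, and the dimensions satisfy the linear recurrence a_{m+4} = 6·a_{m+2} − 8·a_m for every integer m ≥ 1. (Equivalently, the Hilbert series of ℂ⟨u,v⟩^{D_{16}} is (5t⁴−5t²+1)/(8t⁴−6t²+1).) -/

import Mathlib

open scoped Real

noncomputable section

/-- Words in two letters. -/
abbrev FW := FreeMonoid (Fin 2)

/-- The free associative unital ℂ-algebra on two generators. -/
abbrev FA := MonoidAlgebra ℂ FW

/-- The generator `u`. -/
def gu : FA := MonoidAlgebra.of ℂ FW (FreeMonoid.of 0)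

/-- The generator `v`. -/
def gv : FA := MonoidAlgebra.of ℂ FW (FreeMonoid.of 1)

/-- The algebra endomorphism `ρ` with `ρ(u) = ξ u`, `ρ(v) = ξ⁻¹ v`, `ξ = exp(2πi/n)`. -/
def dRho (n : ℕ) : FA →ₐ[ℂ] FA :=
  MonoidAlgebra.lift ℂ FA FW
    (FreeMonoid.lift fun i : Fin 2 =>
      if i = 0 then Complex.exp (2 * Real.pi * Complex.I / n) • gu
      else (Complex.exp (2 * Real.pi * Complex.I / n))⁻¹ • gv)

/-- The algebra endomorphism `τ` exchanging `u` and `v`. -/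
def dTau : FA →ₐ[ℂ] FA :=
  MonoidAlgebra.lift ℂ FA FW
    (FreeMonoid.lift fun i : Fin 2 => if i = 0 then gv else gu)

/-- The invariant algebra `ℂ⟨u,v⟩^{D_{2n}}`. -/
def invAlg (n : ℕ) : Subalgebra ℂ FA :=
  AlgHom.equalizer (dRho n) (AlgHom.id ℂ FA) ⊓ AlgHom.equalizer dTau (AlgHom.id ℂ FA)

/-- The degree-`j` homogeneous component of `ℂ⟨u,v⟩`: the span of words of length `j`. -/
def degComp (j : ℕ) : Submodule ℂ FA :=
  (Finsupp.supported ℂ ℂ {w : FW | FreeMonoid.length w = j}).comap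
    (MonoidAlgebra.coeffLinearEquiv ℂ).toLinearMap

/-- `a_j`: the dimension of the degree-`j` homogeneous component of the invariant algebra. -/
def aDim (n j : ℕ) : ℕ :=
  Module.finrank ℂ ↥((invAlg n).toSubmodule ⊓ degComp j)

/-!
`ρ` multiplies a word `w` by `ξ ^ weight w`, where `weight w = #u - #v`, and `τ` swaps the letters
of `w`. So an invariant of degree `j` is a coefficient function on the words of length `j` whose
weight is divisible by `n`, constant on the pairs `{w, τ w}`; these pairs have two elements as soon
as `j > 0`, hence `2 a_j` is the number of such words. Counting words of length `j` by weight
modulo `8` gives the recursion `N_{j+2}(r) = N_j(r - 2) + 2 N_j(r) + N_j(r + 2)`, whence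
`N_{2k+2}(0) = 4^k + 2^k`, while words of odd length have odd weight. Thus
`a_{2k+2} = (4^k + 2^k) / 2` and `a_{2k+1} = 0`, and `x^2 - 6x + 8 = (x - 2)(x - 4)` gives the
recurrence.
-/

open MonoidAlgebra

namespace DihedralInvariants

def letterWeight (i : Fin 2) : ℤ := if i = 0 then 1 else -1

def weight (w : FW) : ℤ := (w.toList.map letterWeight).sum

lemma letterWeight_rev (i : Fin 2) : letterWeight i.rev = -letterWeight i := by
  fin_cases i <;> rfl

lemma even_letterWeight_add_one (i : Fin 2) : Even (letterWeight i + 1) := by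
  fin_cases i <;> decide

@[simp] lemma weight_one : weight 1 = 0 := rfl

@[simp] lemma weight_of_mul (i : Fin 2) (w : FW) :
    weight (.of i * w) = letterWeight i + weight w :=
  List.sum_cons

def swapUV : FW →* FW := FreeMonoid.map Fin.rev

@[simp] lemma swapUV_of_mul (i : Fin 2) (w : FW) :
    swapUV (.of i * w) = .of i.rev * swapUV w := rfl

@[simp] lemma swapUV_swapUV (w : FW) : swapUV (swapUV w) = w := by
  induction w using FreeMonoid.recOn with
  | one => rfl
  | of_mul i w ih => simp [ih]

lemma swapUV_involutive : Function.Involutive swapUV := swapUV_swapUV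

@[simp] lemma length_swapUV (w : FW) : (swapUV w).length = w.length := List.length_map _

@[simp] lemma weight_swapUV (w : FW) : weight (swapUV w) = -weight w := by
  induction w using FreeMonoid.recOn with
  | one => rfl
  | of_mul i w ih => rw [swapUV_of_mul, weight_of_mul, weight_of_mul, letterWeight_rev, ih, neg_add]

lemma swapUV_ne_self {w : FW} (hw : w ≠ 1) : swapUV w ≠ w := by
  cases w using FreeMonoid.casesOn with
  | one => exact absurd rfl hw
  | of_mul i w =>
    intro h
    have := congrArg FreeMonoid.toList h
    simp only [swapUV_of_mul, FreeMonoid.toList_of_mul, List.cons.injEq] at this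
    fin_cases i <;> simp at this

def xi (n : ℕ) : ℂ := Complex.exp (2 * Real.pi * Complex.I / n)

lemma xi_ne_zero (n : ℕ) : xi n ≠ 0 := Complex.exp_ne_zero _

lemma lift_eq_single_weight (n : ℕ) (w : FW) :
    FreeMonoid.lift (fun i : Fin 2 => if i = 0 then xi n • gu else (xi n)⁻¹ • gv) w =
      single w (xi n ^ weight w) := by
  induction w using FreeMonoid.recOn with
  | one => simp [one_def]
  | of_mul i w ih =>
    rw [map_mul, ih, weight_of_mul, zpow_add₀ (xi_ne_zero n)]
    fin_cases i <;> simp [gu, gv, letterWeight, of_apply, single_mul_single]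

lemma dRho_single (n : ℕ) (w : FW) (c : ℂ) :
    dRho n (single w c) = single w (xi n ^ weight w * c) := by
  rw [dRho, lift_single, ← xi, lift_eq_single_weight, smul_single', mul_comm]

lemma lift_eq_swapUV :
    FreeMonoid.lift (fun i : Fin 2 => if i = 0 then gv else gu) = (of ℂ FW).comp swapUV :=
  FreeMonoid.hom_eq fun i => by fin_cases i <;> rfl

lemma dTau_single (w : FW) (c : ℂ) : dTau (single w c) = single (swapUV w) c := by
  rw [dTau, lift_single, lift_eq_swapUV, MonoidHom.comp_apply, of_apply, smul_single', mul_one]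

lemma coeff_dRho (n : ℕ) (f : FA) (w : FW) :
    (dRho n f).coeff w = xi n ^ weight w * f.coeff w := by
  induction f using MonoidAlgebra.induction_linear with
  | zero => simp
  | add f g hf hg => simp [coeff_add, hf, hg, mul_add]
  | single m r =>
    classical
    rw [dRho_single, coeff_single, coeff_single, Finsupp.single_apply, Finsupp.single_apply]
    split_ifs with h
    · rw [h]
    · rw [mul_zero]

lemma coeff_dTau (f : FA) (w : FW) : (dTau f).coeff w = f.coeff (swapUV w) := by
  induction f using MonoidAlgebra.induction_linear with
  | zero => simp
  | add f g hf hg => simp [coeff_add, hf, hg]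
  | single m r =>
    classical
    rw [dTau_single, coeff_single, coeff_single, Finsupp.single_apply, Finsupp.single_apply,
      swapUV_involutive.eq_iff]

lemma isPrimitiveRoot_xi {n : ℕ} (hn : n ≠ 0) : IsPrimitiveRoot (xi n) n :=
  Complex.isPrimitiveRoot_exp n hn

lemma dRho_eq_self_iff {n : ℕ} (hn : n ≠ 0) (f : FA) :
    dRho n f = f ↔ ∀ w, f.coeff w ≠ 0 → (weight w : ZMod n) = 0 := by
  simp only [← coeff_inj, Finsupp.ext_iff, coeff_dRho, ZMod.intCast_zmod_eq_zero_iff_dvd,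
    ← (isPrimitiveRoot_xi hn).zpow_eq_one_iff_dvd]
  refine forall_congr' fun w => ?_
  by_cases hw : f.coeff w = 0 <;> simp [hw]

lemma dTau_eq_self_iff (f : FA) : dTau f = f ↔ ∀ w, f.coeff (swapUV w) = f.coeff w := by
  simp only [← coeff_inj, Finsupp.ext_iff, coeff_dTau]

lemma mem_degComp_iff {j : ℕ} {f : FA} : f ∈ degComp j ↔ ∀ w, f.coeff w ≠ 0 → w.length = j := by
  simp [degComp, Finsupp.mem_supported, Set.subset_def]

def words (n j : ℕ) (r : ZMod n) : Set FW := {w | w.length = j ∧ (weight w : ZMod n) = r}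

lemma words_finite (n j : ℕ) (r : ZMod n) : (words n j r).Finite :=
  (List.finite_length_eq (Fin 2) j).subset fun _ hw => hw.1

lemma swapUV_mem_words {n j : ℕ} {w : FW} (hw : w ∈ words n j 0) : swapUV w ∈ words n j 0 := by
  obtain ⟨hlen, hwt⟩ := hw
  exact ⟨by rw [length_swapUV, hlen], by rw [weight_swapUV, Int.cast_neg, hwt, neg_zero]⟩

lemma mem_invariants_iff {n j : ℕ} (hn : n ≠ 0) (f : FA) :
    f ∈ (invAlg n).toSubmodule ⊓ degComp j ↔
      (∀ w, f.coeff w ≠ 0 → w ∈ words n j 0) ∧ ∀ w, f.coeff (swapUV w) = f.coeff w := by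
  simp only [Submodule.mem_inf, Subalgebra.mem_toSubmodule, invAlg, Algebra.mem_inf,
    AlgHom.mem_equalizer, AlgHom.id_apply, dRho_eq_self_iff hn, dTau_eq_self_iff,
    mem_degComp_iff, words, Set.mem_ofPred_eq]
  grind

def rep (w : FW) : FW := if w.toList.head? = some 1 then swapUV w else w

lemma rep_eq_or (w : FW) : rep w = w ∨ rep w = swapUV w := by
  unfold rep; split_ifs <;> simp

lemma rep_swapUV (w : FW) : rep (swapUV w) = rep w := by
  cases w using FreeMonoid.casesOn with
  | one => rfl
  | of_mul i w => fin_cases i <;> simp [rep]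

lemma rep_rep (w : FW) : rep (rep w) = rep w := by
  rcases rep_eq_or w with h | h
  · rw [h, h]
  · rw [h, rep_swapUV, h]

lemma rep_mem_words_iff {n j : ℕ} {w : FW} : rep w ∈ words n j 0 ↔ w ∈ words n j 0 := by
  rcases rep_eq_or w with h | h <;> rw [h]
  exact ⟨fun hw => swapUV_swapUV w ▸ swapUV_mem_words hw, swapUV_mem_words⟩

def reps (n j : ℕ) : Set FW := {w | w ∈ words n j 0 ∧ rep w = w}

lemma reps_subset_words {n j : ℕ} : reps n j ⊆ words n j 0 := fun _ hw => hw.1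

lemma coeff_rep {n j : ℕ} (hn : n ≠ 0) {f : FA} (hf : f ∈ (invAlg n).toSubmodule ⊓ degComp j)
    (w : FW) : f.coeff (rep w) = f.coeff w := by
  rcases rep_eq_or w with h | h <;> rw [h]
  exact ((mem_invariants_iff hn f).1 hf).2 w

def coeffOnReps (n j : ℕ) : ↥((invAlg n).toSubmodule ⊓ degComp j) →ₗ[ℂ] (reps n j → ℂ) where
  toFun f t := f.1.coeff t
  map_add' _ _ := rfl
  map_smul' _ _ := rfl

lemma coeffOnReps_injective {n : ℕ} (hn : n ≠ 0) (j : ℕ) :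
    Function.Injective (coeffOnReps n j) := by
  refine (injective_iff_map_eq_zero _).2 fun ⟨f, hf⟩ hzero => ?_
  ext w
  rw [ZeroMemClass.coe_zero, coeff_zero, Finsupp.coe_zero, Pi.zero_apply, ← coeff_rep hn hf]
  by_contra hw
  have hrep : rep w ∈ reps n j :=
    ⟨((mem_invariants_iff hn f).1 hf).1 _ hw, rep_rep w⟩
  exact hw (congrFun hzero ⟨rep w, hrep⟩)

lemma coeffOnReps_surjective {n : ℕ} (hn : n ≠ 0) (j : ℕ) :
    Function.Surjective (coeffOnReps n j) := by
  classical
  intro g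
  let c : FW → ℂ := fun w => if h : rep w ∈ reps n j then g ⟨rep w, h⟩ else 0
  have hc : ∀ w, c w ≠ 0 → w ∈ words n j 0 := fun w hw => by
    by_contra h
    exact hw (dif_neg fun hr => h (rep_mem_words_iff.1 hr.1))
  have hfin : (Function.support c).Finite := (words_finite n j 0).subset hc
  have hf : ofCoeff (Finsupp.ofSupportFinite c hfin) ∈
      (invAlg n).toSubmodule ⊓ degComp j :=
    (mem_invariants_iff hn _).2 ⟨hc, fun w => by simp [Finsupp.ofSupportFinite_coe, c, rep_swapUV]⟩
  refine ⟨⟨_, hf⟩, funext fun t => ?_⟩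
  change Finsupp.ofSupportFinite c hfin t = g t
  have ht : rep t ∈ reps n j := by rw [t.2.2]; exact t.2
  rw [Finsupp.ofSupportFinite_coe]
  simp only [c, dif_pos ht, t.2.2]

lemma aDim_eq_ncard_reps {n : ℕ} (hn : n ≠ 0) (j : ℕ) : aDim n j = (reps n j).ncard := by
  have : Fintype (reps n j) := ((words_finite n j 0).subset reps_subset_words).fintype
  rw [aDim, (LinearEquiv.ofBijective _
    ⟨coeffOnReps_injective hn j, coeffOnReps_surjective hn j⟩).finrank_eq,
    Module.finrank_fintype_fun_eq_card, Set.ncard_eq_toFinset_card', Set.toFinset_card]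

lemma reps_zero (n : ℕ) : reps n 0 = {1} := by
  ext w
  simp only [reps, words, Set.mem_ofPred_eq, Set.mem_singleton_iff, FreeMonoid.length_eq_zero]
  constructor
  · exact fun h => h.1.1
  · rintro rfl
    exact ⟨⟨rfl, by simp⟩, rfl⟩

lemma words_eq_reps_union {n j : ℕ} :
    words n j 0 = reps n j ∪ swapUV '' reps n j := by
  ext w
  refine ⟨fun hw => ?_, ?_⟩
  · rcases rep_eq_or w with h | h
    · exact Or.inl ⟨hw, h⟩
    · refine Or.inr ⟨swapUV w, ⟨swapUV_mem_words hw, ?_⟩, swapUV_swapUV w⟩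
      rw [rep_swapUV, h]
  · rintro (hw | ⟨t, ht, rfl⟩)
    exacts [hw.1, swapUV_mem_words ht.1]

lemma disjoint_reps_image_swapUV {n j : ℕ} (hj : j ≠ 0) :
    Disjoint (reps n j) (swapUV '' reps n j) := by
  rw [Set.disjoint_left]
  rintro _ ⟨-, hw⟩ ⟨t, ⟨⟨htlen, -⟩, ht⟩, rfl⟩
  refine swapUV_ne_self (w := t) (fun h1 => hj ?_) ?_
  · rw [← htlen, h1, FreeMonoid.length_one]
  · rw [← hw, rep_swapUV, ht]

lemma two_mul_ncard_reps {n j : ℕ} (hj : j ≠ 0) :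
    2 * (reps n j).ncard = (words n j 0).ncard := by
  have hfin : (reps n j).Finite := (words_finite n j 0).subset reps_subset_words
  rw [words_eq_reps_union, Set.ncard_union_eq (disjoint_reps_image_swapUV hj) hfin (hfin.image _),
    Set.ncard_image_of_injective _ swapUV_involutive.injective, two_mul]

lemma of_mul_eq_of_mul_iff {α : Type*} {a b : α} {x w : FreeMonoid α} :
    FreeMonoid.of a * x = .of b * w ↔ a = b ∧ x = w := by
  rw [← FreeMonoid.toList.injective.eq_iff, FreeMonoid.toList_of_mul, FreeMonoid.toList_of_mul,
    List.cons.injEq, FreeMonoid.toList.injective.eq_iff]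

lemma of_mul_mem_words {n j : ℕ} {r : ZMod n} (i : Fin 2) (w : FW) :
    .of i * w ∈ words n (j + 1) r ↔ w ∈ words n j (r - letterWeight i) := by
  simp only [words, Set.mem_ofPred_eq, FreeMonoid.length_mul, FreeMonoid.length_of, weight_of_mul,
    Int.cast_add, eq_sub_iff_add_eq', add_comm 1 w.length, Nat.add_right_cancel_iff]

lemma words_succ (n j : ℕ) (r : ZMod n) :
    words n (j + 1) r =
      (FreeMonoid.of 0 * ·) '' words n j (r - 1) ∪ (FreeMonoid.of 1 * ·) '' words n j (r + 1) := by
  ext w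
  cases w using FreeMonoid.casesOn with
  | one => simp [words]
  | of_mul i w =>
    rw [of_mul_mem_words]
    fin_cases i <;> simp [letterWeight, of_mul_eq_of_mul_iff]

lemma ncard_words_zero (n : ℕ) (r : ZMod n) : (words n 0 r).ncard = if r = 0 then 1 else 0 := by
  have : words n 0 r = if r = 0 then {1} else ∅ := by
    ext w
    cases w using FreeMonoid.casesOn with
    | one => split_ifs with hr <;> simp [words, hr, eq_comm]
    | of_mul i w => split_ifs <;> simp [words]
  rw [this]
  split_ifs <;> simp

lemma ncard_words_succ (n j : ℕ) (r : ZMod n) :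
    (words n (j + 1) r).ncard = (words n j (r - 1)).ncard + (words n j (r + 1)).ncard := by
  have hdisj : Disjoint ((FreeMonoid.of 0 * ·) '' words n j (r - 1))
      ((FreeMonoid.of 1 * ·) '' words n j (r + 1)) := by
    rw [Set.disjoint_left]
    rintro _ ⟨w, -, rfl⟩ ⟨w', -, h⟩
    exact absurd (of_mul_eq_of_mul_iff.1 h).1 (by decide)
  rw [words_succ, Set.ncard_union_eq hdisj ((words_finite ..).image _) ((words_finite ..).image _),
    Set.ncard_image_of_injective _ (mul_right_injective _),
    Set.ncard_image_of_injective _ (mul_right_injective _)]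

lemma ncard_words_add_two (n j : ℕ) (r : ZMod n) :
    (words n (j + 2) r).ncard =
      (words n j (r - 2)).ncard + 2 * (words n j r).ncard + (words n j (r + 2)).ncard := by
  rw [ncard_words_succ, ncard_words_succ, ncard_words_succ, sub_sub, add_assoc r 1 1,
    sub_add_cancel, add_sub_cancel_right, one_add_one_eq_two]
  ring

lemma even_weight_add_length (w : FW) : Even (weight w + w.length) := by
  induction w using FreeMonoid.recOn with
  | one => simp
  | of_mul i w ih =>
    rw [weight_of_mul, FreeMonoid.length_mul, FreeMonoid.length_of, Nat.cast_add, Nat.cast_one,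
      add_add_add_comm]
    exact (even_letterWeight_add_one i).add ih

lemma words_eq_empty_of_odd {n j : ℕ} (hn : Even n) (hj : Odd j) : words n j 0 = ∅ := by
  refine Set.eq_empty_of_forall_notMem fun w ⟨hlen, hwt⟩ => ?_
  have h2 : (2 : ℤ) ∣ weight w := (Int.natCast_dvd_natCast.2 (even_iff_two_dvd.1 hn)).trans
    ((ZMod.intCast_zmod_eq_zero_iff_dvd _ _).1 hwt)
  obtain ⟨k, hk⟩ := even_weight_add_length w
  obtain ⟨m, rfl⟩ := hj
  omega

lemma ncard_words_eight (k : ℕ) :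
    (words 8 (2 * k + 2) 0).ncard = 4 ^ k + 2 ^ k ∧ (words 8 (2 * k + 2) 2).ncard = 4 ^ k ∧
      (words 8 (2 * k + 2) 4).ncard + 2 ^ k = 4 ^ k ∧ (words 8 (2 * k + 2) 6).ncard = 4 ^ k := by
  induction k with
  | zero => simp only [Nat.mul_zero, ncard_words_add_two 8 0, ncard_words_zero]; decide
  | succ k ih =>
    obtain ⟨h0, h2, h4, h6⟩ := ih
    rw [show 2 * (k + 1) + 2 = 2 * k + 2 + 2 by ring, pow_succ, pow_succ]
    simp only [ncard_words_add_two 8 (2 * k + 2),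
      show (0 : ZMod 8) - 2 = 6 from rfl, show (0 : ZMod 8) + 2 = 2 from rfl,
      show (2 : ZMod 8) - 2 = 0 from rfl, show (2 : ZMod 8) + 2 = 4 from rfl,
      show (4 : ZMod 8) - 2 = 2 from rfl, show (4 : ZMod 8) + 2 = 6 from rfl,
      show (6 : ZMod 8) - 2 = 4 from rfl, show (6 : ZMod 8) + 2 = 0 from rfl]
    omega

lemma aDim_zero {n : ℕ} (hn : n ≠ 0) : aDim n 0 = 1 := by
  rw [aDim_eq_ncard_reps hn, reps_zero, Set.ncard_singleton]

lemma aDim_eq_zero_of_odd {n j : ℕ} (hn : n ≠ 0) (hn2 : Even n) (hj : Odd j) : aDim n j = 0 := by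
  rw [aDim_eq_ncard_reps hn, Set.subset_empty_iff.1
    (reps_subset_words.trans (words_eq_empty_of_odd hn2 hj).subset), Set.ncard_empty]

lemma two_mul_aDim_eight (k : ℕ) : 2 * aDim 8 (2 * k + 2) = 4 ^ k + 2 ^ k := by
  rw [aDim_eq_ncard_reps (by norm_num), two_mul_ncard_reps (by omega), (ncard_words_eight k).1]

lemma aDim_eight_of_odd {j : ℕ} (hj : Odd j) : aDim 8 j = 0 :=
  aDim_eq_zero_of_odd (by norm_num) (by decide) hj

lemma aDim_eight_recurrence {m : ℕ} (hm : 1 ≤ m) :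
    (aDim 8 (m + 4) : ℤ) = 6 * aDim 8 (m + 2) - 8 * aDim 8 m := by
  rcases Nat.even_or_odd m with ⟨r, rfl⟩ | hodd
  · obtain ⟨k, rfl⟩ : ∃ k, r = k + 1 := ⟨r - 1, by omega⟩
    have h0 := two_mul_aDim_eight k
    have h1 := two_mul_aDim_eight (k + 1)
    have h2 := two_mul_aDim_eight (k + 2)
    rw [pow_succ, pow_succ] at h1
    rw [pow_succ, pow_succ, pow_succ, pow_succ] at h2
    rw [show k + 1 + (k + 1) + 2 = 2 * (k + 1) + 2 by ring,
      show k + 1 + (k + 1) + 4 = 2 * (k + 2) + 2 by ring, show k + 1 + (k + 1) = 2 * k + 2 by ring]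
    omega
  · rw [aDim_eight_of_odd (hodd.add_even (by decide)),
      aDim_eight_of_odd (hodd.add_even (by decide)), aDim_eight_of_odd hodd]
    rfl

end DihedralInvariants

/-- For `n = 8`: initial values and linear recurrence for the dimensions of the homogeneous
components of `ℂ⟨u,v⟩^{D₁₆}`. -/
theorem dihedral_invariants_recurrence_n8 :
    aDim 8 0 = 1 ∧ aDim 8 1 = 0 ∧ aDim 8 2 = 1 ∧ aDim 8 3 = 0 ∧ aDim 8 4 = 3 ∧
      ∀ m : ℕ, 1 ≤ m →
        (aDim 8 (m + 4) : ℤ) = 6 * aDim 8 (m + 2) - 8 * aDim 8 m := by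
  have ha2 := DihedralInvariants.two_mul_aDim_eight 0
  have ha4 := DihedralInvariants.two_mul_aDim_eight 1
  norm_num at ha2 ha4
  exact ⟨DihedralInvariants.aDim_zero (by norm_num), DihedralInvariants.aDim_eight_of_odd odd_one,
    by omega, DihedralInvariants.aDim_eight_of_odd (by decide), by omega,
    fun _ hm => DihedralInvariants.aDim_eight_recurrence hm⟩
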